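/- arXiv:2301.07730 — 2 statements merged into one kernel-verified Lean document; each statement's English description precedes it below -/
import Mathlib

section
/- Let m, d ≥ 1 be natural numbers and α ≥ 1 a real number. Let J₀ be a unitary on ℂ^m⊗ℂ^d, let e₀ ∈ ℂ^m be the first standard basis vector, and define W = α·(⟨e₀|⊗I_d)·J₀·(|e₀⟩⊗I_d) ∈ M_d(ℂ). Let Γ ⊆ ℂ^d be a subspace such that W†W·φ = φ for every φ ∈ Γ (i.e., W is an exact isometry on Γ). Set Π₀ = |e₀⟩⟨e₀|⊗I_d, L₀ = 2Π₀ − I, S₀ = −J₀·L₀·J₀†·L₀, and θ = arcsin(1/α). Then for every natural number ℓ and every unit vector φ ∈ Γ: ‖S₀^ℓ·J₀·(e₀⊗φ) − sin((2ℓ+1)θ)·(e₀⊗Wφ)‖ = |cos((2ℓ+1)θ)|, where ‖·‖ is the Euclidean norm. -/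
open scoped Matrix Kronecker ComplexOrder

/-- The operator (spectral) norm of a square complex matrix. -/
noncomputable def opNorm {n : Type*} [Fintype n] [DecidableEq n] (A : Matrix n n ℂ) : ℝ :=
  ‖Matrix.toEuclideanCLM (𝕜 := ℂ) A‖

/-- The square root of a positive semidefinite matrix (Mathlib's former `Matrix.PosSemidef.sqrt`). -/
noncomputable def Matrix.PosSemidef.sqrt {n 𝕜 : Type*} [Fintype n] [DecidableEq n] [RCLike 𝕜]
    {A : Matrix n n 𝕜} (hA : A.PosSemidef) : Matrix n n 𝕜 :=
  hA.1.eigenvectorUnitary.1 * Matrix.diagonal ((↑) ∘ (√·) ∘ hA.1.eigenvalues) *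
    (star hA.1.eigenvectorUnitary : Matrix n n 𝕜)

/-- The trace norm `‖A‖₁ = Tr √(Aᴴ A)` of a square complex matrix. -/
noncomputable def traceNorm {n : Type*} [Fintype n] [DecidableEq n] (A : Matrix n n ℂ) : ℝ :=
  ((Matrix.posSemidef_conjTranspose_mul_self A).sqrt.trace).re

/-- The (square-root) fidelity `F(ρ,σ) = ‖√ρ √σ‖₁` of positive semidefinite matrices. -/
noncomputable def fidelity {n : Type*} [Fintype n] [DecidableEq n] {ρ σ : Matrix n n ℂ}
    (hρ : ρ.PosSemidef) (hσ : σ.PosSemidef) : ℝ :=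
  traceNorm (hρ.sqrt * hσ.sqrt)

/-- Functional calculus for a Hermitian matrix: `f(A) = Σ_i f(λ_i) |v_i⟩⟨v_i|`. -/
noncomputable def matFun {n : Type*} [Fintype n] [DecidableEq n] {A : Matrix n n ℂ}
    (hA : A.IsHermitian) (f : ℝ → ℝ) : Matrix n n ℂ :=
  (hA.eigenvectorUnitary : Matrix n n ℂ) *
    Matrix.diagonal (fun i => (f (hA.eigenvalues i) : ℂ)) *
    (star (hA.eigenvectorUnitary : Matrix n n ℂ))

/-- Partial trace over the first tensor factor. -/
noncomputable def ptraceA {a b : Type*} [Fintype a] (X : Matrix (a × b) (a × b) ℂ) :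
    Matrix b b ℂ :=
  Matrix.of fun i j => ∑ k, X (k, i) (k, j)

/-- Partial trace over the second tensor factor. -/
noncomputable def ptraceB {a b : Type*} [Fintype b] (X : Matrix (a × b) (a × b) ℂ) :
    Matrix a a ℂ :=
  Matrix.of fun i j => ∑ k, X (i, k) (j, k)

/-- The outer product `|ψ⟩⟨φ|`. -/
def outer {a : Type*} (ψ φ : a → ℂ) : Matrix a a ℂ :=
  Matrix.of fun i j => ψ i * (starRingEnd ℂ) (φ j)

/-- The Euclidean norm of a finitely supported complex vector. -/
noncomputable def evnorm {a : Type*} [Fintype a] (v : a → ℂ) : ℝ :=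
  Real.sqrt (∑ i, ‖v i‖ ^ 2)

/-!
With `s = sin θ = 1/α`, `ψ = e₀ ⊗ φ` and `g = e₀ ⊗ Wφ`, the block structure of `J₀` and
`W†Wφ = φ` give `Π₀ J₀ ψ = s g` and `Π₀ J₀† g = s ψ`. Hence the plane spanned by `g` and `J₀ψ` is
invariant under `S₀`, which acts on it as a rotation by `2θ`. In the orthonormal frame
`(g, (J₀ψ - s g) / cos θ)` the vector `J₀ψ` sits at angle `θ`, so `S₀^ℓ J₀ψ` sits at angle
`(2ℓ+1)θ` and its component orthogonal to `g` has length `|cos ((2ℓ+1)θ)|`.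
-/

open Matrix

section EuclideanNorm

variable {ι : Type*} [Fintype ι]

lemma evnorm_eq_norm_toLp (v : ι → ℂ) : evnorm v = ‖WithLp.toLp 2 v‖ :=
  (EuclideanSpace.norm_eq _).symm

lemma evnorm_ofReal_smul (t : ℝ) (v : ι → ℂ) : evnorm ((t : ℂ) • v) = |t| * evnorm v := by
  simp only [evnorm_eq_norm_toLp, WithLp.toLp_smul, norm_smul, Complex.norm_real, Real.norm_eq_abs]

lemma star_dotProduct_self_eq_evnorm_sq (v : ι → ℂ) : star v ⬝ᵥ v = ((evnorm v ^ 2 : ℝ) : ℂ) := by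
  have h := inner_self_eq_norm_sq_to_K (𝕜 := ℂ) (WithLp.toLp 2 v)
  rw [EuclideanSpace.inner_toLp_toLp, dotProduct_comm] at h
  rw [h, evnorm_eq_norm_toLp]
  push_cast
  rfl

lemma evnorm_eq_of_star_dotProduct_self {v : ι → ℂ} {r : ℝ} (hr : 0 ≤ r)
    (h : star v ⬝ᵥ v = ((r ^ 2 : ℝ) : ℂ)) : evnorm v = r := by
  rw [star_dotProduct_self_eq_evnorm_sq, Complex.ofReal_inj] at h
  exact (pow_left_inj₀ (Real.sqrt_nonneg _) hr two_ne_zero).mp h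

lemma star_dotProduct_self_sub_ofReal_smul {x g : ι → ℂ} {s : ℝ} (hx : star x ⬝ᵥ x = 1)
    (hg : star g ⬝ᵥ g = 1) (hgx : star g ⬝ᵥ x = s) :
    star (x - (s : ℂ) • g) ⬝ᵥ (x - (s : ℂ) • g) = 1 - (s : ℂ) ^ 2 := by
  have hxg : star x ⬝ᵥ g = s := by rw [star_dotProduct, hgx, Complex.star_def, Complex.conj_ofReal]
  simp only [star_sub, star_smul, sub_dotProduct, dotProduct_sub, smul_dotProduct, dotProduct_smul,
    hx, hg, hgx, hxg, Complex.star_def, Complex.conj_ofReal, smul_eq_mul]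
  ring

lemma star_dotProduct_eq_of_mulVec_eq_smul {P : Matrix ι ι ℂ} (hP : P.IsHermitian) {g x : ι → ℂ}
    {s : ℂ} (hg : P *ᵥ g = g) (hx : P *ᵥ x = s • g) (hg1 : star g ⬝ᵥ g = 1) : star g ⬝ᵥ x = s :=
  calc star g ⬝ᵥ x = star (P *ᵥ g) ⬝ᵥ x := by rw [hg]
    _ = star g ⬝ᵥ (P *ᵥ x) := by rw [star_mulVec, ← dotProduct_mulVec, hP.eq]
    _ = s := by rw [hx, dotProduct_smul, hg1, smul_eq_mul, mul_one]

end EuclideanNorm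

/- `t` stands for `cos ((2k+1)θ) / cos θ`; it is kept existential so that nothing is divided by
`cos θ`, which vanishes when `sin θ = 1`. -/
lemma exists_pow_apply_eq_sin_smul_add_smul {V : Type*} [AddCommGroup V] [Module ℂ V]
    (f : Module.End ℂ V) (θ : ℝ) {g x : V}
    (hg : f g = g - (2 * Real.sin θ : ℂ) • x)
    (hx : f x = (2 * Real.sin θ : ℂ) • g + (1 - 4 * Real.sin θ ^ 2 : ℂ) • x) (k : ℕ) :
    ∃ t : ℝ, Real.cos θ * t = Real.cos ((2 * k + 1) * θ) ∧
      (f ^ k) x = (Real.sin ((2 * k + 1) * θ) : ℂ) • g + (t : ℂ) • (x - (Real.sin θ : ℂ) • g) := by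
  induction k with
  | zero => exact ⟨1, by simp, by simp⟩
  | succ k ih =>
    obtain ⟨t, ht, hfx⟩ := ih
    set φ := (2 * k + 1) * θ
    have hφ : (2 * ((k + 1 : ℕ) : ℝ) + 1) * θ = φ + 2 * θ := by push_cast; ring
    have hpy := Real.sin_sq_add_cos_sq θ
    refine ⟨(1 - 2 * Real.sin θ ^ 2) * t - 2 * Real.sin θ * Real.sin φ, ?_, ?_⟩
    · rw [hφ, Real.cos_add, Real.sin_two_mul, Real.cos_two_mul]
      linear_combination (2 * Real.cos θ ^ 2 - 1) * ht - 2 * Real.cos θ * t * hpy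
    · have hsin : Real.sin (φ + 2 * θ)
          = (1 - 2 * Real.sin θ ^ 2) * Real.sin φ + 2 * Real.sin θ * (1 - Real.sin θ ^ 2) * t := by
        rw [Real.sin_add, Real.sin_two_mul, Real.cos_two_mul]
        linear_combination (2 * Real.sin φ + 2 * Real.sin θ * t) * hpy
          - 2 * Real.sin θ * Real.cos θ * ht
      rw [pow_succ', Module.End.mul_apply, hfx, map_add, map_smul, map_smul, map_sub, map_smul,
        hg, hx, hφ, hsin]
      push_cast
      module

section Amplification

variable {ι : Type*} [Fintype ι] [DecidableEq ι]

noncomputable def reflection (P : Matrix ι ι ℂ) : Matrix ι ι ℂ := (2 : ℂ) • P - 1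

noncomputable def amplificationOperator (J P : Matrix ι ι ℂ) : Matrix ι ι ℂ :=
  -(J * reflection P * Jᴴ * reflection P)

lemma reflection_mulVec (P : Matrix ι ι ℂ) (x : ι → ℂ) :
    reflection P *ᵥ x = (2 : ℂ) • (P *ᵥ x) - x := by
  rw [reflection, sub_mulVec, smul_mulVec, one_mulVec]

lemma amplificationOperator_mulVec (J P : Matrix ι ι ℂ) (x : ι → ℂ) :
    amplificationOperator J P *ᵥ x = -(J *ᵥ (reflection P *ᵥ (Jᴴ *ᵥ (reflection P *ᵥ x)))) := by
  simp only [amplificationOperator, neg_mulVec, mulVec_mulVec, Matrix.mul_assoc]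

variable {J P : Matrix ι ι ℂ} {ψ g : ι → ℂ} {s : ℂ}

lemma mulVec_conjTranspose_mulVec_of_mem_unitaryGroup (hJ : J ∈ unitaryGroup ι ℂ) (x : ι → ℂ) :
    J *ᵥ (Jᴴ *ᵥ x) = x := by
  rw [mulVec_mulVec, ← star_eq_conjTranspose, mem_unitaryGroup_iff.mp hJ, one_mulVec]

lemma conjTranspose_mulVec_mulVec_of_mem_unitaryGroup (hJ : J ∈ unitaryGroup ι ℂ) (x : ι → ℂ) :
    Jᴴ *ᵥ (J *ᵥ x) = x := by
  rw [mulVec_mulVec, ← star_eq_conjTranspose, mem_unitaryGroup_iff'.mp hJ, one_mulVec]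

lemma amplificationOperator_mulVec_target (hJ : J ∈ unitaryGroup ι ℂ) (hg : P *ᵥ g = g)
    (hJg : P *ᵥ (Jᴴ *ᵥ g) = s • ψ) :
    amplificationOperator J P *ᵥ g = g - (2 * s) • (J *ᵥ ψ) := by
  simp only [amplificationOperator_mulVec, reflection_mulVec, hg, hJg, mulVec_sub, mulVec_smul,
    mulVec_conjTranspose_mulVec_of_mem_unitaryGroup hJ]
  module

lemma amplificationOperator_mulVec_initial (hJ : J ∈ unitaryGroup ι ℂ) (hψ : P *ᵥ ψ = ψ)
    (hJψ : P *ᵥ (J *ᵥ ψ) = s • g) (hJg : P *ᵥ (Jᴴ *ᵥ g) = s • ψ) :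
    amplificationOperator J P *ᵥ (J *ᵥ ψ) = (2 * s) • g + (1 - 4 * s ^ 2) • (J *ᵥ ψ) := by
  simp only [amplificationOperator_mulVec, reflection_mulVec, hψ, hJψ, hJg, mulVec_sub,
    mulVec_smul, mulVec_conjTranspose_mulVec_of_mem_unitaryGroup hJ,
    conjTranspose_mulVec_mulVec_of_mem_unitaryGroup hJ]
  module

theorem evnorm_amplificationOperator_pow_mulVec_sub (hJ : J ∈ unitaryGroup ι ℂ)
    (hP : P.IsHermitian) {θ : ℝ} (hθ : 0 ≤ Real.cos θ) (hψ : P *ᵥ ψ = ψ) (hg : P *ᵥ g = g)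
    (hJψ : P *ᵥ (J *ᵥ ψ) = (Real.sin θ : ℂ) • g) (hJg : P *ᵥ (Jᴴ *ᵥ g) = (Real.sin θ : ℂ) • ψ)
    (hψ1 : star ψ ⬝ᵥ ψ = 1) (hg1 : star g ⬝ᵥ g = 1) (k : ℕ) :
    evnorm (amplificationOperator J P ^ k *ᵥ (J *ᵥ ψ) - (Real.sin ((2 * k + 1) * θ) : ℂ) • g)
      = |Real.cos ((2 * k + 1) * θ)| := by
  obtain ⟨t, ht, hpow⟩ := exists_pow_apply_eq_sin_smul_add_smul (toLin' (amplificationOperator J P))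
    θ (by simpa using amplificationOperator_mulVec_target hJ hg hJg)
    (by simpa using amplificationOperator_mulVec_initial hJ hψ hJψ hJg) k
  rw [← toLin'_pow, toLin'_apply] at hpow
  have hx1 : star (J *ᵥ ψ) ⬝ᵥ (J *ᵥ ψ) = 1 := by
    rw [star_mulVec, ← dotProduct_mulVec, conjTranspose_mulVec_mulVec_of_mem_unitaryGroup hJ, hψ1]
  have hnorm : evnorm (J *ᵥ ψ - (Real.sin θ : ℂ) • g) = Real.cos θ := by
    refine evnorm_eq_of_star_dotProduct_self hθ ?_
    rw [star_dotProduct_self_sub_ofReal_smul hx1 hg1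
      (star_dotProduct_eq_of_mulVec_eq_smul hP hg hJψ hg1), Real.cos_sq']
    push_cast
    rfl
  rw [hpow, add_sub_cancel_left, evnorm_ofReal_smul, hnorm, ← ht, abs_mul, abs_of_nonneg hθ,
    mul_comm]

end Amplification

section SingleTensor

variable {a b : Type*} [DecidableEq a]

def singleTensor (i₀ : a) (v : b → ℂ) : a × b → ℂ := fun p => if p.1 = i₀ then v p.2 else 0

@[simp]
lemma singleTensor_apply_mk (i₀ : a) (v : b → ℂ) (j : b) : singleTensor i₀ v (i₀, j) = v j := by
  simp [singleTensor]

lemma singleTensor_smul (i₀ : a) (c : ℂ) (v : b → ℂ) :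
    singleTensor i₀ (c • v) = c • singleTensor i₀ v := by
  ext p
  by_cases h : p.1 = i₀ <;> simp [singleTensor, h]

lemma star_singleTensor_dotProduct [Fintype a] [Fintype b] (i₀ : a) (u : b → ℂ) (x : a × b → ℂ) :
    star (singleTensor i₀ u) ⬝ᵥ x = star u ⬝ᵥ fun j => x (i₀, j) := by
  rw [dotProduct, Fintype.sum_prod_type, Finset.sum_eq_single i₀ (by simp_all [singleTensor])
    (by simp)]
  simp [dotProduct, singleTensor]

lemma star_singleTensor_dotProduct_singleTensor [Fintype a] [Fintype b] (i₀ : a) (u v : b → ℂ) :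
    star (singleTensor i₀ u) ⬝ᵥ singleTensor i₀ v = star u ⬝ᵥ v := by
  simp [star_singleTensor_dotProduct]

lemma mulVec_singleTensor_apply_mk [Fintype a] [Fintype b] (M : Matrix (a × b) (a × b) ℂ)
    (i₀ i₁ : a) (v : b → ℂ) :
    (fun j => (M *ᵥ singleTensor i₀ v) (i₁, j)) = M.submatrix (Prod.mk i₁) (Prod.mk i₀) *ᵥ v := by
  ext j
  rw [mulVec, dotProduct, Fintype.sum_prod_type,
    Finset.sum_eq_single i₀ (by simp_all [singleTensor]) (by simp)]
  simp [mulVec, dotProduct, singleTensor]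

lemma single_kronecker_one_mulVec [Fintype a] [Fintype b] [DecidableEq b] (i₀ : a) (x : a × b → ℂ) :
    (single i₀ i₀ (1 : ℂ) ⊗ₖ (1 : Matrix b b ℂ)) *ᵥ x = singleTensor i₀ fun j => x (i₀, j) := by
  ext ⟨i, j⟩
  by_cases h : i = i₀
  · subst h
    simp [mulVec, dotProduct, Fintype.sum_prod_type, single, one_apply, singleTensor, ite_and]
  · simp [mulVec, dotProduct, single, singleTensor, h, Ne.symm h]

lemma single_kronecker_one_mulVec_singleTensor [Fintype a] [Fintype b] [DecidableEq b] (i₀ : a)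
    (v : b → ℂ) : (single i₀ i₀ (1 : ℂ) ⊗ₖ (1 : Matrix b b ℂ)) *ᵥ singleTensor i₀ v
      = singleTensor i₀ v := by
  simp [single_kronecker_one_mulVec]

lemma isHermitian_single_kronecker_one [DecidableEq b] (i₀ : a) :
    (single i₀ i₀ (1 : ℂ) ⊗ₖ (1 : Matrix b b ℂ)).IsHermitian := by
  rw [IsHermitian, conjTranspose_kronecker, conjTranspose_single, conjTranspose_one, star_one]

end SingleTensor

theorem exact_oblivious_amplitude_amplification_general (m d : ℕ) (hm : 0 < m)
    (α : ℝ) (hα : 1 ≤ α)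
    (J₀ : Matrix (Fin m × Fin d) (Fin m × Fin d) ℂ)
    (hJ₀ : J₀ ∈ Matrix.unitaryGroup (Fin m × Fin d) ℂ)
    (W : Matrix (Fin d) (Fin d) ℂ)
    (hW : W = (α : ℂ) • Matrix.of (fun i j => J₀ (⟨0, hm⟩, i) (⟨0, hm⟩, j)))
    (Γ : Submodule ℂ (Fin d → ℂ))
    (hΓ : ∀ φ ∈ Γ, (Wᴴ * W) *ᵥ φ = φ)
    (Pi₀ L₀ S₀ : Matrix (Fin m × Fin d) (Fin m × Fin d) ℂ)
    (hPi₀ : Pi₀ = Matrix.single (⟨0, hm⟩ : Fin m) (⟨0, hm⟩ : Fin m) (1 : ℂ)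
      ⊗ₖ (1 : Matrix (Fin d) (Fin d) ℂ))
    (hL₀ : L₀ = (2 : ℂ) • Pi₀ - 1)
    (hS₀ : S₀ = -(J₀ * L₀ * J₀ᴴ * L₀))
    (θ : ℝ) (hθ : θ = Real.arcsin (1 / α))
    (ℓ : ℕ) (φ : Fin d → ℂ) (hφΓ : φ ∈ Γ) (hφ : evnorm φ = 1) :
    evnorm ((S₀ ^ ℓ * J₀) *ᵥ (fun p : Fin m × Fin d => if p.1 = ⟨0, hm⟩ then φ p.2 else 0)
        - (Complex.ofReal (Real.sin (((2 * ℓ + 1 : ℕ) : ℝ) * θ))) •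
            (fun p : Fin m × Fin d => if p.1 = ⟨0, hm⟩ then (W *ᵥ φ) p.2 else 0))
      = |Real.cos (((2 * ℓ + 1 : ℕ) : ℝ) * θ)| := by
  set i₀ : Fin m := ⟨0, hm⟩
  have hsin : Real.sin θ = α⁻¹ := by
    have hα₀ : 0 < α := by linarith
    rw [hθ, Real.sin_arcsin (by linarith [one_div_pos.mpr hα₀]) ((div_le_one hα₀).mpr hα), one_div]
  have hB : J₀.submatrix (Prod.mk i₀) (Prod.mk i₀) = (Real.sin θ : ℂ) • W := by
    rw [hW, hsin, smul_smul, Complex.ofReal_inv, inv_mul_cancel₀ (by norm_cast; linarith), one_smul]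
    rfl
  have hWφ : Wᴴ *ᵥ (W *ᵥ φ) = φ := by rw [mulVec_mulVec, hΓ φ hφΓ]
  have hφ1 : star φ ⬝ᵥ φ = 1 := by simp [star_dotProduct_self_eq_evnorm_sq, hφ]
  have hJψ : Pi₀ *ᵥ (J₀ *ᵥ singleTensor i₀ φ) = (Real.sin θ : ℂ) • singleTensor i₀ (W *ᵥ φ) := by
    rw [hPi₀, single_kronecker_one_mulVec, mulVec_singleTensor_apply_mk, hB, smul_mulVec,
      singleTensor_smul]
  have hJg : Pi₀ *ᵥ (J₀ᴴ *ᵥ singleTensor i₀ (W *ᵥ φ)) = (Real.sin θ : ℂ) • singleTensor i₀ φ := by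
    rw [hPi₀, single_kronecker_one_mulVec, mulVec_singleTensor_apply_mk, ← conjTranspose_submatrix,
      hB, conjTranspose_smul, Complex.star_def, Complex.conj_ofReal, smul_mulVec, hWφ,
      singleTensor_smul]
  have hg1 : star (singleTensor i₀ (W *ᵥ φ)) ⬝ᵥ singleTensor i₀ (W *ᵥ φ) = 1 := by
    rw [star_singleTensor_dotProduct_singleTensor, star_mulVec, ← dotProduct_mulVec, hWφ, hφ1]
  have hP : ∀ v, Pi₀ *ᵥ singleTensor i₀ v = singleTensor i₀ v := fun v => by
    rw [hPi₀, single_kronecker_one_mulVec_singleTensor]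
  subst hS₀ hL₀
  rw [← mulVec_mulVec, Nat.cast_add, Nat.cast_mul, Nat.cast_ofNat, Nat.cast_one]
  exact evnorm_amplificationOperator_pow_mulVec_sub hJ₀ (hPi₀ ▸ isHermitian_single_kronecker_one i₀)
    (hθ ▸ Real.cos_arcsin_nonneg _) (hP φ) (hP (W *ᵥ φ)) hJψ hJg
    (by rw [star_singleTensor_dotProduct_singleTensor, hφ1]) hg1 ℓ

/-- Exact oblivious amplitude amplification: if `J₀` is a unitary on `ℂ^m⊗ℂ^d` whose top-left
block (w.r.t. the ancilla state `e₀`), rescaled by `α`, is an exact isometry `W` on a subspace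
`Γ`, then with `Pi₀ = |e₀⟩⟨e₀|⊗I`, `L₀ = 2Pi₀ − I`, `S₀ = −J₀L₀J₀†L₀` and `θ = arcsin(1/α)`, for
every `ℓ` and unit `φ ∈ Γ`,
`‖S₀^ℓ J₀ (e₀⊗φ) − sin((2ℓ+1)θ)·(e₀⊗Wφ)‖ = |cos((2ℓ+1)θ)|`. -/
theorem exact_oblivious_amplitude_amplification (m d : ℕ) (hm : 0 < m) (hd : 0 < d)
    (α : ℝ) (hα : 1 ≤ α)
    (J₀ : Matrix (Fin m × Fin d) (Fin m × Fin d) ℂ)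
    (hJ₀ : J₀ ∈ Matrix.unitaryGroup (Fin m × Fin d) ℂ)
    (W : Matrix (Fin d) (Fin d) ℂ)
    (hW : W = (α : ℂ) • Matrix.of (fun i j => J₀ (⟨0, hm⟩, i) (⟨0, hm⟩, j)))
    (Γ : Submodule ℂ (Fin d → ℂ))
    (hΓ : ∀ φ ∈ Γ, (Wᴴ * W) *ᵥ φ = φ)
    (Pi₀ L₀ S₀ : Matrix (Fin m × Fin d) (Fin m × Fin d) ℂ)
    (hPi₀ : Pi₀ = Matrix.single (⟨0, hm⟩ : Fin m) (⟨0, hm⟩ : Fin m) (1 : ℂ)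
      ⊗ₖ (1 : Matrix (Fin d) (Fin d) ℂ))
    (hL₀ : L₀ = (2 : ℂ) • Pi₀ - 1)
    (hS₀ : S₀ = -(J₀ * L₀ * J₀ᴴ * L₀))
    (θ : ℝ) (hθ : θ = Real.arcsin (1 / α))
    (ℓ : ℕ) (φ : Fin d → ℂ) (hφΓ : φ ∈ Γ) (hφ : evnorm φ = 1) :
    evnorm ((S₀ ^ ℓ * J₀) *ᵥ (fun p : Fin m × Fin d => if p.1 = ⟨0, hm⟩ then φ p.2 else 0)
        - (Complex.ofReal (Real.sin (((2 * ℓ + 1 : ℕ) : ℝ) * θ))) •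
            (fun p : Fin m × Fin d => if p.1 = ⟨0, hm⟩ then (W *ᵥ φ) p.2 else 0))
      = |Real.cos (((2 * ℓ + 1 : ℕ) : ℝ) * θ)| :=
  exact_oblivious_amplitude_amplification_general m d hm α hα J₀ hJ₀ W hW Γ hΓ Pi₀ L₀ S₀ hPi₀ hL₀
    hS₀ θ hθ ℓ φ hφΓ hφ
end

section
/- For every natural number D ≥ 1 and every D×D complex matrix A all of whose entries satisfy |A_{ij}| ≤ 1, there exists a unitary U on ℂ^D⊗ℂ^D⊗ℂ² such that for all i, j ∈ {1, …, D}: ⟨e_i⊗e₁⊗e₁, U·(e_j⊗e₁⊗e₁)⟩ = A_{ij}/D, where e_k denotes the k-th standard basis vector of the respective space. Equivalently, D·(I_D⊗⟨e₁⊗e₁|)·U·(I_D⊗|e₁⊗e₁⟩) = A, i.e., every matrix with entries of magnitude at most 1 admits an exact unitary block encoding with post-selection factor D using one ancilla register of dimension D and one ancilla qubit. -/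
open scoped Matrix Kronecker ComplexOrder

/-!
Let `F` be a unitary on `ℂ^D` whose `0`-th column is the uniform vector `(1/√D, …, 1/√D)`,
and for all `j, i` let `R j i` be a qubit unitary with `(R j i)₀₀ = A i j`, which exists
because `‖A i j‖ ≤ 1`. With `W = 1 ⊗ F ⊗ 1` and `P : |j, k⟩ ⊗ |t⟩ ↦ |k, j⟩ ⊗ R j k |t⟩`,
take `U = W⋆ P W`: `W` spreads `|j, 0, 0⟩` uniformly over the second register, `P` swaps the
two registers while rotating the qubit, and pairing with `W |i, 0, 0⟩` keeps the single term
`k = i`, of amplitude `(1/√D)² · A i j`.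
-/

namespace Matrix

variable {l m n α : Type*}

section Zero

variable [Zero α] [DecidableEq m]

/-- `swapControlled R` maps `|c, d⟩ ⊗ |t⟩` to `|d, c⟩ ⊗ R c d |t⟩`. -/
def swapControlled (R : m → m → Matrix n n α) : Matrix (m × m × n) (m × m × n) α :=
  (blockDiagonal fun cd : m × m => R cd.1 cd.2).submatrix
    (((Equiv.prodAssoc m m n).symm.trans (Equiv.prodComm _ _)).trans
      ((Equiv.refl n).prodCongr (Equiv.prodComm m m)))
    ((Equiv.prodAssoc m m n).symm.trans (Equiv.prodComm _ _))

theorem swapControlled_apply (R : m → m → Matrix n n α) (i j k k' : m) (s t : n) :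
    swapControlled R (i, k, s) (j, k', t) = if k = j ∧ i = k' then R j i s t else 0 := by
  simp only [swapControlled, submatrix_apply, Equiv.trans_apply, Equiv.prodAssoc_symm_apply,
    Equiv.prodComm_apply, Equiv.prodCongr_apply, Prod.swap_prod_mk, Prod.map_apply,
    Equiv.refl_apply, blockDiagonal_apply, Prod.ext_iff]
  split_ifs with h
  · rw [h.1]
  · rfl

end Zero

variable [CommRing α] [StarRing α]

theorem submatrix_equiv_mem_unitaryGroup [Fintype m] [DecidableEq m] [Fintype n] [DecidableEq n]
    {U : Matrix m m α} (hU : U ∈ unitaryGroup m α) (e₁ e₂ : n ≃ m) :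
    U.submatrix e₁ e₂ ∈ unitaryGroup n α := by
  rw [mem_unitaryGroup_iff', star_eq_conjTranspose, conjTranspose_submatrix,
    submatrix_mul_equiv _ _ _ e₁, ← star_eq_conjTranspose, mem_unitaryGroup_iff'.mp hU,
    submatrix_one_equiv]

theorem blockDiagonal_mem_unitaryGroup [Fintype l] [DecidableEq l] [Fintype m] [DecidableEq m]
    {U : l → Matrix m m α} (hU : ∀ i, U i ∈ unitaryGroup m α) :
    blockDiagonal U ∈ unitaryGroup (m × l) α := by
  rw [mem_unitaryGroup_iff', star_eq_conjTranspose, blockDiagonal_conjTranspose,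
    ← blockDiagonal_mul]
  simp only [← star_eq_conjTranspose, fun i => mem_unitaryGroup_iff'.mp (hU i)]
  exact blockDiagonal_one

theorem swapControlled_mem_unitaryGroup [Fintype m] [DecidableEq m] [Fintype n] [DecidableEq n]
    {R : m → m → Matrix n n α} (hR : ∀ c d, R c d ∈ unitaryGroup n α) :
    swapControlled R ∈ unitaryGroup (m × m × n) α :=
  submatrix_equiv_mem_unitaryGroup
    (blockDiagonal_mem_unitaryGroup fun cd : m × m => hR cd.1 cd.2) _ _

theorem of_fin_two_mem_unitaryGroup {a b : α} (h : star a * a + star b * b = 1) :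
    !![a, -star b; b, star a] ∈ unitaryGroup (Fin 2) α := by
  rw [mem_unitaryGroup_iff']
  ext i j
  fin_cases i <;> fin_cases j <;> simp [mul_apply]
  · exact h
  · ring
  · ring
  · linear_combination h

theorem star_one_kronecker_kronecker_one_mul_mul_apply [Fintype l] [DecidableEq l] [Fintype m]
    [Fintype n] [DecidableEq n] (F : Matrix m m α) (M : Matrix (l × m × n) (l × m × n) α)
    (i j : l) (k₀ k₁ : m) (s t : n) :
    (star ((1 : Matrix l l α) ⊗ₖ (F ⊗ₖ (1 : Matrix n n α))) * M * (1 ⊗ₖ (F ⊗ₖ 1)) :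
        Matrix (l × m × n) (l × m × n) α) (i, k₀, s) (j, k₁, t) =
      ∑ k, ∑ k', star (F k k₀) * M (i, k, s) (j, k', t) * F k' k₁ := by
  simp only [mul_apply, Fintype.sum_prod_type, star_apply, kroneckerMap_apply, one_apply]
  simp only [apply_ite star, star_zero, mul_ite, ite_mul, mul_one, one_mul, mul_zero, zero_mul,
    Finset.sum_ite_irrel, Finset.sum_const_zero, Finset.sum_ite_eq', Finset.mem_univ, if_true,
    Finset.sum_mul]
  exact Finset.sum_comm

theorem star_one_kronecker_kronecker_one_mul_swapControlled_mul_apply [Fintype m]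
    [DecidableEq m] [Fintype n] [DecidableEq n] (F : Matrix m m α) (R : m → m → Matrix n n α)
    (i j k₀ k₁ : m) (s t : n) :
    (star ((1 : Matrix m m α) ⊗ₖ (F ⊗ₖ (1 : Matrix n n α))) * swapControlled R *
        (1 ⊗ₖ (F ⊗ₖ 1)) : Matrix (m × m × n) (m × m × n) α) (i, k₀, s) (j, k₁, t) =
      star (F j k₀) * R j i s t * F i k₁ := by
  simp only [star_one_kronecker_kronecker_one_mul_mul_apply, swapControlled_apply, ite_and,
    mul_ite, ite_mul, mul_zero, zero_mul, Finset.sum_ite_eq', Finset.sum_ite_eq,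
    Finset.sum_ite_irrel, Finset.sum_const_zero, Finset.mem_univ, if_true]

end Matrix

section RCLike

variable {𝕜 n : Type*} [RCLike 𝕜] [Fintype n] [DecidableEq n]

theorem exists_mem_unitaryGroup_forall_apply_eq {v : EuclideanSpace 𝕜 n} (hv : ‖v‖ = 1)
    (k₀ : n) : ∃ F ∈ Matrix.unitaryGroup n 𝕜, ∀ k, F k k₀ = v k := by
  have hsingle : Orthonormal 𝕜 (({k₀} : Set n).domRestrict fun _ => v) := by
    rw [orthonormal_iff_ite]
    rintro ⟨i, rfl⟩ ⟨j, rfl⟩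
    simp [inner_self_eq_norm_sq_to_K, hv]
  obtain ⟨b, hb⟩ := hsingle.exists_orthonormalBasis_extension_of_card_eq (by simp)
  refine ⟨_, (EuclideanSpace.basisFun n 𝕜).toMatrix_orthonormalBasis_mem_unitary b,
    fun k => ?_⟩
  simp [Module.Basis.toMatrix_apply, hb k₀ rfl]

theorem exists_mem_unitaryGroup_forall_apply_eq_inv_sqrt_card (k₀ : n) :
    ∃ F ∈ Matrix.unitaryGroup n 𝕜, ∀ k, F k k₀ = ((√(Fintype.card n) : ℝ) : 𝕜)⁻¹ := by
  refine exists_mem_unitaryGroup_forall_apply_eq (v := WithLp.toLp 2 fun _ => _) ?_ k₀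
  have : Nonempty n := ⟨k₀⟩
  rw [EuclideanSpace.norm_eq]
  simp [norm_inv, Real.sq_sqrt]

theorem exists_mem_unitaryGroup_fin_two_apply_zero_zero {a : 𝕜} (ha : ‖a‖ ≤ 1) :
    ∃ R ∈ Matrix.unitaryGroup (Fin 2) 𝕜, R 0 0 = a := by
  set b : 𝕜 := ((√(1 - ‖a‖ ^ 2) : ℝ) : 𝕜)
  refine ⟨!![a, -star b; b, star a], Matrix.of_fin_two_mem_unitaryGroup ?_, rfl⟩
  rw [RCLike.star_def, RCLike.conj_ofReal, RCLike.conj_mul, ← RCLike.ofReal_mul,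
    Real.mul_self_sqrt (by nlinarith [norm_nonneg a])]
  push_cast
  ring

end RCLike

/-- Every `D×D` matrix with entries of magnitude at most `1` admits an exact unitary block
encoding with post-selection factor `D`, using one ancilla register of dimension `D` and one
ancilla qubit: there is a unitary `U` on `ℂ^D⊗ℂ^D⊗ℂ²` with
`⟨e_i⊗e₁⊗e₁, U (e_j⊗e₁⊗e₁)⟩ = A_{ij}/D`. -/
theorem block_encoding_of_bounded_entries (D : ℕ) (hD : 0 < D)
    (A : Matrix (Fin D) (Fin D) ℂ) (hA : ∀ i j, ‖A i j‖ ≤ 1) :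
    ∃ U ∈ Matrix.unitaryGroup (Fin D × Fin D × Fin 2) ℂ,
      ∀ i j : Fin D,
        U (i, (⟨0, hD⟩ : Fin D), (0 : Fin 2)) (j, (⟨0, hD⟩ : Fin D), (0 : Fin 2))
          = A i j / D := by
  obtain ⟨F, hF, hF₀⟩ :=
    exists_mem_unitaryGroup_forall_apply_eq_inv_sqrt_card (𝕜 := ℂ) (⟨0, hD⟩ : Fin D)
  choose R hR hR₀ using fun j i => exists_mem_unitaryGroup_fin_two_apply_zero_zero (hA i j)
  have hW : (1 : Matrix (Fin D) (Fin D) ℂ) ⊗ₖ (F ⊗ₖ (1 : Matrix (Fin 2) (Fin 2) ℂ)) ∈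
      Matrix.unitaryGroup (Fin D × Fin D × Fin 2) ℂ :=
    Matrix.kronecker_mem_unitary (one_mem _) (Matrix.kronecker_mem_unitary hF (one_mem _))
  refine ⟨_, mul_mem (mul_mem (Unitary.star_mem hW)
    (Matrix.swapControlled_mem_unitaryGroup hR)) hW, fun i j => ?_⟩
  have hsqrt : (√(D : ℝ) : ℂ) * √(D : ℝ) = D := by
    rw [← Complex.ofReal_mul, Real.mul_self_sqrt D.cast_nonneg, Complex.ofReal_natCast]
  rw [Matrix.star_one_kronecker_kronecker_one_mul_swapControlled_mul_apply, hF₀, hF₀, hR₀,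
    Fintype.card_fin, RCLike.ofReal_eq_complex_ofReal, star_inv₀, Complex.star_def,
    Complex.conj_ofReal, ← hsqrt]
  ring
end
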